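/- Let M be a real symmetric n×n matrix. Then for any two indices i, j, the product of vertex M-energies satisfies ME(v_i) · ME(v_j) ≥ ([M − (tr(M)/n)I]_{ij})². -/

import Mathlib

open Matrix BigOperators

/-- The absolute value of a real matrix `B`, defined as `(B * Bᵀ)^(1/2)`. -/
noncomputable def matAbs {n : ℕ} (B : Matrix (Fin n) (Fin n) ℝ) : Matrix (Fin n) (Fin n) ℝ :=
  let hA : (B * Bᵀ).PosSemidef := Matrix.conjTranspose_eq_transpose_of_trivial B ▸
    Matrix.posSemidef_self_mul_conjTranspose B
  (hA.isHermitian.eigenvectorUnitary : Matrix (Fin n) (Fin n) ℝ) *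
    diagonal ((↑) ∘ (√·) ∘ hA.isHermitian.eigenvalues) *
    (star hA.isHermitian.eigenvectorUnitary : Matrix (Fin n) (Fin n) ℝ)

/-- The M-energy of the `i`-th vertex: `(|M - (tr M / n) • I|)_{ii}`. -/
noncomputable def mEnergy {n : ℕ} (M : Matrix (Fin n) (Fin n) ℝ) (i : Fin n) : ℝ :=
  matAbs (M - (M.trace / n) • 1) i i

/-! For symmetric `A` with orthonormal eigenbasis `u_k` and eigenvalues `λ_k`, `|A| = cfc |·| A`, so
`A i j = ∑ λ_k u_k(i) u_k(j)` and `|A| i i = ∑ |λ_k| u_k(i)²`. The inequality is Cauchy–Schwarz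
with weights `|λ_k|`. -/

lemma sq_sum_mul_mul_le_sum_abs_mul_sq_mul {ι : Type*} (s : Finset ι) (c a b : ι → ℝ) :
    (∑ k ∈ s, c k * (a k * b k)) ^ 2 ≤
      (∑ k ∈ s, |c k| * a k ^ 2) * ∑ k ∈ s, |c k| * b k ^ 2 :=
  Finset.sum_sq_le_sum_mul_sum_of_sq_le_mul s (fun _ _ => by positivity) (fun _ _ => by positivity)
    fun k _ => le_of_eq <| by linear_combination -(a k ^ 2 * b k ^ 2) * sq_abs (c k)

namespace Matrix.IsHermitian

variable {m : Type*} [Fintype m] [DecidableEq m] {A : Matrix m m ℝ}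

lemma cfc_apply_eq_sum (hA : A.IsHermitian) (f : ℝ → ℝ) (i j : m) :
    cfc f A i j =
      ∑ k, f (hA.eigenvalues k) * (hA.eigenvectorBasis k i * hA.eigenvectorBasis k j) := by
  rw [hA.cfc_eq, IsHermitian.cfc, Unitary.conjStarAlgAut_apply, mul_assoc, mul_apply]
  simp [mul_apply, diagonal_apply, mul_left_comm]

lemma sq_apply_le_cfc_abs_apply_mul (hA : A.IsHermitian) (i j : m) :
    A i j ^ 2 ≤ cfc (fun x : ℝ => |x|) A i i * cfc (fun x : ℝ => |x|) A j j := by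
  conv_lhs => rw [← cfc_id' ℝ A]
  simp only [hA.cfc_apply_eq_sum, ← sq]
  exact sq_sum_mul_mul_le_sum_abs_mul_sq_mul _ _ _ _

end Matrix.IsHermitian

lemma matAbs_eq_cfc_sqrt {n : ℕ} (B : Matrix (Fin n) (Fin n) ℝ) :
    matAbs B = cfc Real.sqrt (B * Bᵀ) := by
  have hBB : (B * Bᵀ).IsHermitian := (B.isHermitian_mul_conjTranspose_self :)
  rw [hBB.cfc_eq, IsHermitian.cfc, Unitary.conjStarAlgAut_apply]
  rfl

lemma Matrix.IsSymm.matAbs_eq_cfc_abs {n : ℕ} {A : Matrix (Fin n) (Fin n) ℝ} (hA : A.IsSymm) :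
    matAbs A = cfc (fun x : ℝ => |x|) A := by
  have hA' : IsSelfAdjoint A := hA
  rw [matAbs_eq_cfc_sqrt, hA.eq, ← sq, ← cfc_comp_pow Real.sqrt 2 A]
  simp only [Real.sqrt_sq_eq_abs]

theorem stmt3 {n : ℕ} (M : Matrix (Fin n) (Fin n) ℝ) (hM : M.IsSymm) (i j : Fin n) :
    mEnergy M i * mEnergy M j ≥ ((M - (M.trace / n) • 1) i j) ^ 2 := by
  have hA : (M - (M.trace / n) • 1).IsSymm := hM.sub (isSymm_one.smul _)
  rw [ge_iff_le, mEnergy, mEnergy, IsSymm.matAbs_eq_cfc_abs hA]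
  exact IsHermitian.sq_apply_le_cfc_abs_apply_mul hA _ _
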